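/- For d ≥ 3 and ν = (d-2)/2, the function f(x) = x·K_{ν+1}(x)/K_ν(x) on (0,∞) is strictly increasing, where K_μ denotes the modified Bessel function of the second kind. -/

import Mathlib

open MeasureTheory Real Set Filter

noncomputable section

/-- The modified Bessel function of the second kind (Macdonald function), via the standard
integral representation `K_ν(x) = ∫_0^∞ exp(-x cosh t) cosh(ν t) dt` (for `x > 0`). -/
def besselK (ν x : ℝ) : ℝ :=
  ∫ t in Ioi (0 : ℝ), Real.exp (-x * Real.cosh t) * Real.cosh (ν * t)

open scoped Topology

/-! Differentiating under the integral sign gives `K_ν' = -(K_{ν-1} + K_{ν+1}) / 2`, and an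
integration by parts (against `d(exp (-x cosh t)) = -x sinh t exp (-x cosh t) dt`) gives the
recurrence `K_{ν+1} - K_{ν-1} = (2ν / x) K_ν`. Together they turn the derivative of
`x K_{ν+1} / K_ν` into `x (K_{ν-1} K_{ν+1} - K_ν²) / K_ν²`, which is positive by the Turán
inequality. That inequality holds because `2 (K_{ν-1} K_{ν+1} - K_ν²)` is the integral over
`(0, ∞)²` of the symmetrised kernel `turanKernel`, and a product-to-sum expansion writes this kernel as a
sum of products of `cosh`s with `cosh (s ± t) - 1 ≥ 0`. -/

lemma sq_div_four_le_cosh {t : ℝ} (ht : 0 ≤ t) : t ^ 2 / 4 ≤ cosh t := by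
  rw [cosh_eq]
  nlinarith [quadratic_le_exp_of_nonneg ht, exp_pos (-t)]

lemma exp_neg_mul_cosh_add_mul_le {x : ℝ} (hx : 0 < x) (a : ℝ) {t : ℝ} (ht : 0 ≤ t) :
    exp (-x * cosh t + a * t) ≤ exp ((a + 1) ^ 2 / x) * exp (-t) := by
  rw [← exp_add, exp_le_exp]
  have hcosh : x * (t ^ 2 / 4) ≤ x * cosh t :=
    mul_le_mul_of_nonneg_left (sq_div_four_le_cosh ht) hx.le
  have hsq : 0 ≤ (x * t / 2 - (a + 1)) ^ 2 / x := by positivity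
  have hexpand : (x * t / 2 - (a + 1)) ^ 2 / x
      = x * (t ^ 2 / 4) - (a + 1) * t + (a + 1) ^ 2 / x := by
    field_simp
    ring
  linarith

lemma cosh_le_exp_abs (y : ℝ) : cosh y ≤ exp |y| := by
  rw [← cosh_abs, cosh_eq]
  linarith [exp_le_exp.2 (by linarith [abs_nonneg y] : -|y| ≤ |y|)]

lemma abs_sinh_le_cosh (y : ℝ) : |sinh y| ≤ cosh y := by
  rw [abs_sinh, ← cosh_abs]
  exact (sinh_lt_cosh _).le

lemma cosh_mul_le_exp {t : ℝ} (ht : 0 ≤ t) (ν : ℝ) : cosh (ν * t) ≤ exp (|ν| * t) := by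
  simpa [abs_mul, abs_of_nonneg ht] using cosh_le_exp_abs (ν * t)

lemma integrableOn_exp_neg_mul_cosh_mul_cosh {x : ℝ} (hx : 0 < x) (ν : ℝ) :
    IntegrableOn (fun t => exp (-x * cosh t) * cosh (ν * t)) (Ioi 0) := by
  refine ((exp_neg_integrableOn_Ioi 0 one_pos).const_mul (exp ((|ν| + 1) ^ 2 / x))).mono'
    (by fun_prop : Continuous _).aestronglyMeasurable ?_
  filter_upwards [ae_restrict_mem measurableSet_Ioi] with t (ht : 0 < t)
  rw [norm_of_nonneg (by positivity), neg_one_mul]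
  calc exp (-x * cosh t) * cosh (ν * t) ≤ exp (-x * cosh t) * exp (|ν| * t) := by
        gcongr; exact cosh_mul_le_exp ht.le ν
    _ = exp (-x * cosh t + |ν| * t) := (exp_add _ _).symm
    _ ≤ _ := exp_neg_mul_cosh_add_mul_le hx _ ht.le

lemma tendsto_sinh_mul_mul_exp_neg_mul_cosh {x : ℝ} (hx : 0 < x) (ν : ℝ) :
    Tendsto (fun t => sinh (ν * t) * exp (-x * cosh t)) atTop (𝓝 0) := by
  have hdecay : Tendsto (fun t => exp ((|ν| + 1) ^ 2 / x) * exp (-t)) atTop (𝓝 0) := by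
    simpa using (tendsto_exp_neg_atTop_nhds_zero).const_mul (exp ((|ν| + 1) ^ 2 / x))
  refine squeeze_zero_norm' ?_ hdecay
  filter_upwards [eventually_ge_atTop 0] with t ht
  rw [norm_mul, norm_of_nonneg (exp_pos _).le, norm_eq_abs]
  calc |sinh (ν * t)| * exp (-x * cosh t) ≤ exp (|ν| * t) * exp (-x * cosh t) := by
        gcongr; exact (abs_sinh_le_cosh _).trans (cosh_mul_le_exp ht ν)
    _ = exp (-x * cosh t + |ν| * t) := by rw [← exp_add, add_comm]
    _ ≤ _ := exp_neg_mul_cosh_add_mul_le hx _ ht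

lemma integral_pos_of_ae_pos {α : Type*} [MeasurableSpace α] {μ : Measure α} (hμ : μ ≠ 0)
    {f : α → ℝ} (hf : Integrable f μ) (hpos : ∀ᵐ a ∂μ, 0 < f a) :
    0 < ∫ a, f a ∂μ := by
  have hnull : μ (Function.support f)ᶜ = 0 :=
    measure_mono_null (fun a ha (h : 0 < f a) => ha h.ne') (ae_iff.1 hpos)
  rw [integral_pos_iff_support_of_nonneg_ae (hpos.mono fun _ h => h.le) hf,
    measure_congr (ae_eq_univ.2 hnull)]
  exact Measure.measure_univ_pos.2 hμ

lemma besselK_pos {x : ℝ} (hx : 0 < x) (ν : ℝ) : 0 < besselK ν x :=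
  integral_pos_of_ae_pos (by simp [Measure.restrict_eq_zero])
    (integrableOn_exp_neg_mul_cosh_mul_cosh hx ν) (ae_of_all _ fun _ => by positivity)

lemma cosh_mul_cosh_mul_eq (ν t : ℝ) :
    cosh t * cosh (ν * t) = (cosh ((ν + 1) * t) + cosh ((ν - 1) * t)) / 2 := by
  rw [add_mul, sub_mul, one_mul, cosh_add, cosh_sub]
  ring

lemma two_mul_sinh_mul_sinh_mul_eq (ν t : ℝ) :
    2 * sinh t * sinh (ν * t) = cosh ((ν + 1) * t) - cosh ((ν - 1) * t) := by
  rw [add_mul, sub_mul, one_mul, cosh_add, cosh_sub]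
  ring

lemma hasDerivAt_besselK {x : ℝ} (hx : 0 < x) (ν : ℝ) :
    HasDerivAt (besselK ν) (-((besselK (ν + 1) x + besselK (ν - 1) x) / 2)) x := by
  have hcosh_mul : ∀ y, (fun t => cosh t * (exp (-y * cosh t) * cosh (ν * t))) =
      fun t => (exp (-y * cosh t) * cosh ((ν + 1) * t) +
        exp (-y * cosh t) * cosh ((ν - 1) * t)) / 2 := fun y => funext fun t => by
    linear_combination exp (-y * cosh t) * cosh_mul_cosh_mul_eq ν t
  have hbound_int : IntegrableOn
      (fun t => cosh t * (exp (-(x / 2) * cosh t) * cosh (ν * t))) (Ioi 0) := by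
    rw [hcosh_mul]
    exact ((integrableOn_exp_neg_mul_cosh_mul_cosh (half_pos hx) (ν + 1)).add
      (integrableOn_exp_neg_mul_cosh_mul_cosh (half_pos hx) (ν - 1))).div_const 2
  have hderiv := (hasDerivAt_integral_of_dominated_loc_of_deriv_le
    (F := fun y t => exp (-y * cosh t) * cosh (ν * t))
    (F' := fun y t => -(cosh t * (exp (-y * cosh t) * cosh (ν * t))))
    (Ioi_mem_nhds (half_lt_self hx))
    (Eventually.of_forall fun _ => (by fun_prop : Continuous _).aestronglyMeasurable)
    (integrableOn_exp_neg_mul_cosh_mul_cosh hx ν)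
    (by fun_prop : Continuous _).aestronglyMeasurable ?_ hbound_int ?_).2
  · rw [integral_neg, hcosh_mul, integral_div,
      integral_add (integrableOn_exp_neg_mul_cosh_mul_cosh hx (ν + 1))
        (integrableOn_exp_neg_mul_cosh_mul_cosh hx (ν - 1))] at hderiv
    exact hderiv
  · refine ae_of_all _ fun t y (hy : x / 2 < y) => ?_
    rw [norm_neg, norm_of_nonneg (by positivity)]
    gcongr
  · refine ae_of_all _ fun t y _ => ?_
    have hlin : HasDerivAt (fun y => -y * cosh t) (-cosh t) y := by
      simpa using (hasDerivAt_neg y).mul_const (cosh t)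
    exact (hlin.exp.mul_const _).congr_deriv (by ring)

lemma besselK_add_one_sub_besselK_sub_one {x : ℝ} (hx : 0 < x) (ν : ℝ) :
    besselK (ν + 1) x - besselK (ν - 1) x = 2 * ν / x * besselK ν x := by
  have hu : ∀ t ∈ Ioi (0 : ℝ), HasDerivAt (fun t => -2 / x * sinh (ν * t))
      (-2 / x * (ν * cosh (ν * t))) t := fun t _ => by
    simpa [mul_comm] using (((hasDerivAt_id t).const_mul ν).sinh).const_mul (-2 / x)
  have hv : ∀ t ∈ Ioi (0 : ℝ), HasDerivAt (fun t => exp (-x * cosh t))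
      (exp (-x * cosh t) * (-x * sinh t)) t := fun t _ =>
    ((hasDerivAt_cosh t).const_mul (-x)).exp
  have huv' : (fun t => -2 / x * sinh (ν * t) * (exp (-x * cosh t) * (-x * sinh t))) =
      fun t => exp (-x * cosh t) * cosh ((ν + 1) * t) -
        exp (-x * cosh t) * cosh ((ν - 1) * t) := funext fun t => by
    rw [← mul_sub, ← two_mul_sinh_mul_sinh_mul_eq]
    field_simp
  have hu'v : (fun t => -2 / x * (ν * cosh (ν * t)) * exp (-x * cosh t)) =
      fun t => -2 * ν / x * (exp (-x * cosh t) * cosh (ν * t)) := funext fun t => by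
    ring
  have h_zero : Tendsto ((fun t => -2 / x * sinh (ν * t)) * fun t => exp (-x * cosh t))
      (𝓝[>] 0) (𝓝 0) := by
    have hcont : Continuous ((fun t => -2 / x * sinh (ν * t)) * fun t => exp (-x * cosh t)) := by
      fun_prop
    simpa using (hcont.tendsto 0).mono_left nhdsWithin_le_nhds
  have h_infty : Tendsto ((fun t => -2 / x * sinh (ν * t)) * fun t => exp (-x * cosh t))
      atTop (𝓝 0) := by
    simpa [Pi.mul_def, mul_assoc] using
      (tendsto_sinh_mul_mul_exp_neg_mul_cosh hx ν).const_mul (-2 / x)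
  have huv'_int : IntegrableOn ((fun t => -2 / x * sinh (ν * t)) *
      fun t => exp (-x * cosh t) * (-x * sinh t)) (Ioi 0) := by
    rw [Pi.mul_def, huv']
    exact (integrableOn_exp_neg_mul_cosh_mul_cosh hx _).sub
      (integrableOn_exp_neg_mul_cosh_mul_cosh hx _)
  have hu'v_int : IntegrableOn ((fun t => -2 / x * (ν * cosh (ν * t))) *
      fun t => exp (-x * cosh t)) (Ioi 0) := by
    rw [Pi.mul_def, hu'v]
    exact (integrableOn_exp_neg_mul_cosh_mul_cosh hx _).const_mul _
  have hparts := integral_Ioi_mul_deriv_eq_deriv_mul hu hv huv'_int hu'v_int h_zero h_infty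
  rw [huv', hu'v, integral_sub (integrableOn_exp_neg_mul_cosh_mul_cosh hx _)
    (integrableOn_exp_neg_mul_cosh_mul_cosh hx _), integral_const_mul] at hparts
  rw [besselK, besselK, besselK, hparts]
  ring

def turanKernel (ν s t : ℝ) : ℝ :=
  cosh ((ν - 1) * s) * cosh ((ν + 1) * t) + cosh ((ν + 1) * s) * cosh ((ν - 1) * t)
    - 2 * (cosh (ν * s) * cosh (ν * t))

lemma turanKernel_eq (ν s t : ℝ) :
    turanKernel ν s t
      = cosh (ν * (s + t)) * (cosh (s - t) - 1) + cosh (ν * (s - t)) * (cosh (s + t) - 1) := by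
  simp only [turanKernel, mul_add, mul_sub, sub_mul, add_mul, one_mul, cosh_add, cosh_sub]
  ring

lemma turanKernel_pos (ν : ℝ) {s t : ℝ} (hst : s + t ≠ 0) : 0 < turanKernel ν s t := by
  rw [turanKernel_eq]
  have h₁ : 0 ≤ cosh (s - t) - 1 := sub_nonneg.2 (one_le_cosh _)
  have h₂ : 0 < cosh (s + t) - 1 := sub_pos.2 (one_lt_cosh.2 hst)
  positivity

lemma besselK_sq_lt_mul {x : ℝ} (hx : 0 < x) (ν : ℝ) :
    besselK ν x ^ 2 < besselK (ν - 1) x * besselK (ν + 1) x := by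
  set μ := volume.restrict (Ioi (0 : ℝ))
  set f : ℝ → ℝ → ℝ := fun c t => exp (-x * cosh t) * cosh (c * t)
  have hf : ∀ c, Integrable (f c) μ := integrableOn_exp_neg_mul_cosh_mul_cosh hx
  -- symmetrised in the two variables: only then is the integrand pointwise positive
  set G : ℝ × ℝ → ℝ := fun z =>
    f (ν - 1) z.1 * f (ν + 1) z.2 + f (ν + 1) z.1 * f (ν - 1) z.2 - 2 * (f ν z.1 * f ν z.2)
  have hprod : ∀ a b, Integrable (fun z : ℝ × ℝ => f a z.1 * f b z.2) (μ.prod μ) :=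
    fun a b => (hf a).mul_prod (hf b)
  have hsum : Integrable (fun z : ℝ × ℝ =>
      f (ν - 1) z.1 * f (ν + 1) z.2 + f (ν + 1) z.1 * f (ν - 1) z.2) (μ.prod μ) :=
    (hprod _ _).add (hprod _ _)
  have hG_int : Integrable G (μ.prod μ) := hsum.sub ((hprod _ _).const_mul 2)
  have hG_integral : ∫ z, G z ∂(μ.prod μ) =
      2 * (besselK (ν - 1) x * besselK (ν + 1) x - besselK ν x ^ 2) := by
    rw [integral_sub hsum ((hprod _ _).const_mul 2),
      integral_add (hprod _ _) (hprod _ _), integral_const_mul, integral_prod_mul,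
      integral_prod_mul, integral_prod_mul]
    simp only [besselK, f, μ]
    ring
  have hG_pos : ∀ᵐ z ∂(μ.prod μ), 0 < G z := by
    rw [Measure.prod_restrict]
    filter_upwards [ae_restrict_mem (measurableSet_Ioi.prod measurableSet_Ioi)] with z hz
    have hfactor : G z = exp (-x * cosh z.1) * exp (-x * cosh z.2) * turanKernel ν z.1 z.2 := by
      simp only [G, f, turanKernel]
      ring
    rw [hfactor]
    have := turanKernel_pos ν (add_pos hz.1 hz.2).ne'
    positivity
  have hμ : μ.prod μ ≠ 0 := by
    simp [μ, Measure.prod_restrict, Measure.restrict_eq_zero, Measure.prod_prod]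
  linarith [integral_pos_of_ae_pos hμ hG_int hG_pos]

lemma hasDerivAt_besselK_eq_sub {x : ℝ} (hx : 0 < x) (ν : ℝ) :
    HasDerivAt (besselK ν) (ν / x * besselK ν x - besselK (ν + 1) x) x := by
  refine (hasDerivAt_besselK hx ν).congr_deriv ?_
  linear_combination (1 / 2 : ℝ) * besselK_add_one_sub_besselK_sub_one hx ν

lemma hasDerivAt_besselK_add_one {x : ℝ} (hx : 0 < x) (ν : ℝ) :
    HasDerivAt (besselK (ν + 1)) (-besselK ν x - (ν + 1) / x * besselK (ν + 1) x) x := by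
  have hrec := besselK_add_one_sub_besselK_sub_one hx (ν + 1)
  rw [add_sub_cancel_right] at hrec
  refine (hasDerivAt_besselK hx (ν + 1)).congr_deriv ?_
  rw [add_sub_cancel_right]
  linear_combination (-1 / 2 : ℝ) * hrec

lemma strictMonoOn_mul_besselK_add_one_div_besselK (ν : ℝ) :
    StrictMonoOn (fun x => x * besselK (ν + 1) x / besselK ν x) (Ioi 0) := by
  have hderiv : ∀ x ∈ Ioi (0 : ℝ), HasDerivAt (fun x => x * besselK (ν + 1) x / besselK ν x)
      (x * (besselK (ν - 1) x * besselK (ν + 1) x - besselK ν x ^ 2) / besselK ν x ^ 2) x := by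
    intro x (hx : 0 < x)
    have hK := (besselK_pos hx ν).ne'
    have hnum : HasDerivAt (fun y => y * besselK (ν + 1) y)
        (1 * besselK (ν + 1) x + x * (-besselK ν x - (ν + 1) / x * besselK (ν + 1) x)) x :=
      (hasDerivAt_id' x).mul (hasDerivAt_besselK_add_one hx ν)
    refine (hnum.div (hasDerivAt_besselK_eq_sub hx ν) hK).congr_deriv ?_
    have hrec := besselK_add_one_sub_besselK_sub_one hx ν
    field_simp at hrec ⊢
    linear_combination besselK (ν + 1) x * hrec
  refine strictMonoOn_of_hasDerivWithinAt_pos (convex_Ioi 0)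
    (f' := fun x =>
      x * (besselK (ν - 1) x * besselK (ν + 1) x - besselK ν x ^ 2) / besselK ν x ^ 2)
    (fun x hx => (hderiv x hx).continuousAt.continuousWithinAt) ?_ ?_
  all_goals rw [interior_Ioi]
  · exact fun x hx => (hderiv x hx).hasDerivWithinAt
  · intro x (hx : 0 < x)
    have := besselK_sq_lt_mul hx ν
    have := besselK_pos hx ν
    positivity

theorem statement3_general (d : ℕ) :
    StrictMonoOn
      (fun x : ℝ => x * besselK (((d : ℝ) - 2) / 2 + 1) x / besselK (((d : ℝ) - 2) / 2) x)
      (Ioi (0 : ℝ)) :=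
  strictMonoOn_mul_besselK_add_one_div_besselK _

/-- For `d ≥ 3` and `ν = (d-2)/2`, the function `f(x) = x K_{ν+1}(x)/K_ν(x)` is strictly
increasing on `(0, ∞)`. -/
theorem statement3 (d : ℕ) (hd : 3 ≤ d) :
    StrictMonoOn
      (fun x : ℝ => x * besselK (((d : ℝ) - 2) / 2 + 1) x / besselK (((d : ℝ) - 2) / 2) x)
      (Ioi (0 : ℝ)) :=
  statement3_general d
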